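/- (Lemma 1, part 3.) Under assumptions A1–A2, there exist C < ∞ and ρ ∈ (0,1) such that for all 1 ≤ j ≤ d and p ≥ 1, sup_{x_{1:j} ∈ E^j} ‖π_{p,0}(· | x_{1:j}) − π_{p−1,0}(· | x_{1:j})‖_tv ≤ C ρ^{p−1}, i.e. the conditional distributions of the (j+1)-th coordinate of the time-0 smoother given the first j coordinates converge geometrically in total variation as the observation horizon grows. -/

import Mathlib

open MeasureTheory Set

/-- Total variation distance between two measures. -/
noncomputable def tvDist {X : Type*} [MeasurableSpace X] (μ ν : Measure X) : ℝ :=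
  ⨆ A : Set X, |(μ A).toReal - (ν A).toReal|

/-- The box `E^d` inside `Fin d → ℝ`. -/
def box (d : ℕ) (E : Set ℝ) : Set (Fin d → ℝ) := Set.univ.pi fun _ => E

/-- Backward functional of the multidimensional HMM on `X = E^d`. -/
noncomputable def mback (d : ℕ) (E : Set ℝ) (f : (Fin d → ℝ) → (Fin d → ℝ) → ℝ)
    (g : ℕ → (Fin d → ℝ) → ℝ) : ℕ → ℕ → (Fin d → ℝ) → ℝ
  | 0, _, _ => 1
  | m + 1, k, x => ∫ z in box d E, f x z * g (k + 1) z * mback d E f g m (k + 1) z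

/-- Density of the time-0 smoother `π_{p,0}` on `E^d` (observations absorbed in `g`). -/
noncomputable def msmootherDen (d : ℕ) (E : Set ℝ) (f0 : (Fin d → ℝ) → ℝ)
    (f : (Fin d → ℝ) → (Fin d → ℝ) → ℝ) (g : ℕ → (Fin d → ℝ) → ℝ) (p : ℕ)
    (x : Fin d → ℝ) : ℝ :=
  f0 x * g 0 x * mback d E f g p 0 x / ∫ y in box d E, f0 y * g 0 y * mback d E f g p 0 y

/-- Marginal density in the first `j` coordinates of a density `π` on `E^d`. -/
noncomputable def marg (d : ℕ) (E : Set ℝ) (π : (Fin d → ℝ) → ℝ) (j : ℕ)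
    (x : Fin d → ℝ) : ℝ :=
  (∫ z in box d E, π (fun i => if (i : ℕ) < j then x i else z i)) / (volume E).toReal ^ j

/-- The conditional law of the `(j+1)`-th coordinate given the first `j` coordinates `x_{1:j}`,
for a density `π` on `E^d`, as a measure on `E ⊂ ℝ`. -/
noncomputable def condLaw (d : ℕ) (E : Set ℝ) (π : (Fin d → ℝ) → ℝ) (j : Fin d)
    (x : Fin d → ℝ) : Measure ℝ :=
  (volume.restrict E).withDensity fun t =>
    ENNReal.ofReal (marg d E π ((j : ℕ) + 1) (Function.update x j t) / marg d E π (j : ℕ) x)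

/-!
The backward functions `β_m = mback m` are iterates of integral operators whose kernels
`f(x, z) g(z)` lie in `[Cl, Cu]`. Such an operator contracts the Hilbert projective metric:
if `u` is within relative error `η` of a multiple of `v`, then `Ku` is within relative error
`η (1 - Cl / Cu)` of a multiple of `Kv`. By induction `β_{m+1}` is within relative error
`O((1 - Cl / Cu)^m)` of a multiple of `β_m`, and so is the unnormalised smoother density
`f0 g0 β_m`. Integrating out coordinates preserves this, and in the conditional density of
coordinate `j + 1` (a ratio of two marginals) the unknown multiple cancels. The Harnack bounds
`β_m y ≤ (Cu / Cl) β_m y'` and `Cl (b - a)^d β_m ≤ β_{m+1}` keep the ratios of marginals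
bounded, which leaves a uniform bound `C ρ^m` on the difference of the conditional densities,
hence on the total variation distance.
-/

open scoped ENNReal

section TotalVariation

variable {α : Type*} [MeasurableSpace α] {μ : Measure α} {r₁ r₀ : α → ℝ}

lemma toReal_withDensity_ofReal_apply (hr : Integrable r₁ μ) (hr0 : 0 ≤ᵐ[μ] r₁)
    {B : Set α} (hB : MeasurableSet B) :
    ((μ.withDensity fun x => ENNReal.ofReal (r₁ x)) B).toReal = ∫ x in B, r₁ x ∂μ := by
  rw [withDensity_apply _ hB,
    ← ofReal_integral_eq_lintegral_ofReal hr.restrict (ae_restrict_of_ae hr0),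
    ENNReal.toReal_ofReal (integral_nonneg_of_ae (ae_restrict_of_ae hr0))]

lemma toReal_withDensity_ofReal_sub_le (h₁ : Integrable r₁ μ) (h₀ : Integrable r₀ μ)
    (h₁0 : 0 ≤ᵐ[μ] r₁) (h₀0 : 0 ≤ᵐ[μ] r₀) (A : Set α) :
    ((μ.withDensity fun x => ENNReal.ofReal (r₁ x)) A).toReal -
        ((μ.withDensity fun x => ENNReal.ofReal (r₀ x)) A).toReal ≤
      ∫ x, |r₁ x - r₀ x| ∂μ := by
  set ν₁ := μ.withDensity fun x => ENNReal.ofReal (r₁ x)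
  set ν₀ := μ.withDensity fun x => ENNReal.ofReal (r₀ x)
  have : IsFiniteMeasure ν₁ := isFiniteMeasure_withDensity_ofReal h₁.hasFiniteIntegral
  -- `A` need not be measurable: its measurable hull for `ν₀` keeps `ν₀ A` and enlarges `ν₁ A`.
  set B := toMeasurable ν₀ A
  have hB : MeasurableSet B := measurableSet_toMeasurable ν₀ A
  have hν₁ : (ν₁ A).toReal ≤ (ν₁ B).toReal :=
    ENNReal.toReal_mono (measure_ne_top ν₁ B) (measure_mono (subset_toMeasurable ν₀ A))
  calc (ν₁ A).toReal - (ν₀ A).toReal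
      ≤ (ν₁ B).toReal - (ν₀ B).toReal := by rw [measure_toMeasurable]; linarith
    _ = ∫ x in B, (r₁ x - r₀ x) ∂μ := by
      rw [toReal_withDensity_ofReal_apply h₁ h₁0 hB, toReal_withDensity_ofReal_apply h₀ h₀0 hB,
        integral_sub h₁.restrict h₀.restrict]
    _ ≤ ∫ x in B, |r₁ x - r₀ x| ∂μ :=
      integral_mono (h₁.sub h₀).restrict (h₁.sub h₀).abs.restrict fun x => le_abs_self _
    _ ≤ ∫ x, |r₁ x - r₀ x| ∂μ :=
      setIntegral_le_integral (h₁.sub h₀).abs (ae_of_all _ fun x => abs_nonneg _)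

lemma tvDist_withDensity_ofReal_le (h₁ : Integrable r₁ μ) (h₀ : Integrable r₀ μ)
    (h₁0 : 0 ≤ᵐ[μ] r₁) (h₀0 : 0 ≤ᵐ[μ] r₀) :
    tvDist (μ.withDensity fun x => ENNReal.ofReal (r₁ x))
        (μ.withDensity fun x => ENNReal.ofReal (r₀ x)) ≤ ∫ x, |r₁ x - r₀ x| ∂μ := by
  refine Real.iSup_le (fun A => abs_sub_le_iff.2 ⟨?_, ?_⟩) (integral_nonneg fun x => abs_nonneg _)
  · exact toReal_withDensity_ofReal_sub_le h₁ h₀ h₁0 h₀0 A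
  · simpa only [abs_sub_comm] using toReal_withDensity_ofReal_sub_le h₀ h₁ h₀0 h₁0 A

end TotalVariation

section KernelOperator

variable {α : Type*} [MeasurableSpace α] {μ : Measure α} {S : Set α}

lemma integrableOn_of_mem_Icc (hS : MeasurableSet S) (hμS : μ S ≠ ∞) {F : α → ℝ}
    (hF : Measurable F) {lo hi : ℝ} (h : ∀ x ∈ S, F x ∈ Icc lo hi) : IntegrableOn F S μ :=
  Measure.integrableOn_of_bounded hμS hF.aestronglyMeasurable (M := max |lo| |hi|)
    ((ae_restrict_iff' hS).2 (ae_of_all _ fun x hx => abs_le_max_abs_abs (h x hx).1 (h x hx).2))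

lemma setIntegral_mem_Icc (hS : MeasurableSet S) (hμS : μ S ≠ ∞) {F : α → ℝ}
    (hF : IntegrableOn F S μ) {lo hi : ℝ} (h : ∀ x ∈ S, F x ∈ Icc lo hi) :
    ∫ x in S, F x ∂μ ∈ Icc (lo * μ.real S) (hi * μ.real S) := by
  refine ⟨setIntegral_ge_of_const_le_real hS hμS (fun x hx => (h x hx).1) hF, ?_⟩
  calc ∫ x in S, F x ∂μ ≤ ∫ _ in S, hi ∂μ :=
        setIntegral_mono_on hF (integrableOn_const hμS) hS fun x hx => (h x hx).2
    _ = hi * μ.real S := by rw [setIntegral_const, smul_eq_mul, mul_comm]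

lemma setIntegral_le_const_mul_setIntegral (hS : MeasurableSet S) {F G : α → ℝ}
    (hF : IntegrableOn F S μ) (hG : IntegrableOn G S μ) {R : ℝ} (h : ∀ x ∈ S, F x ≤ R * G x) :
    ∫ x in S, F x ∂μ ≤ R * ∫ x in S, G x ∂μ := by
  rw [← integral_const_mul]
  exact setIntegral_mono_on hF (hG.const_mul R) hS h

lemma abs_setIntegral_sub_const_mul_le (hS : MeasurableSet S) {F₁ F₀ : α → ℝ}
    (h₁ : IntegrableOn F₁ S μ) (h₀ : IntegrableOn F₀ S μ) {c η : ℝ}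
    (h : ∀ x ∈ S, |F₁ x - c * F₀ x| ≤ η * F₀ x) :
    |∫ x in S, F₁ x ∂μ - c * ∫ x in S, F₀ x ∂μ| ≤ η * ∫ x in S, F₀ x ∂μ := by
  rw [← integral_const_mul, ← integral_const_mul, ← integral_sub h₁ (h₀.const_mul c),
    ← Real.norm_eq_abs]
  exact norm_integral_le_of_norm_le (h₀.const_mul η) ((ae_restrict_iff' hS).2 (ae_of_all _ h))

lemma integrableOn_mul_of_abs_le (hS : MeasurableSet S) {k u : α → ℝ} (hk : Measurable k)
    {C : ℝ} (hkC : ∀ z ∈ S, |k z| ≤ C) (hu : IntegrableOn u S μ) :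
    IntegrableOn (fun z => k z * u z) S μ :=
  hu.bdd_mul hk.aestronglyMeasurable ((ae_restrict_iff' hS).2 (ae_of_all _ hkC))

lemma exists_abs_setIntegral_kernel_sub_le (hS : MeasurableSet S)
    {K : α → α → ℝ} {Cl Cu : ℝ} (hCl : 0 ≤ Cl) (hCu : 0 < Cu) (hKm : ∀ x, Measurable (K x))
    (hK : ∀ x ∈ S, ∀ z ∈ S, K x z ∈ Icc Cl Cu) {u v : α → ℝ} (hu : IntegrableOn u S μ)
    (hv : IntegrableOn v S μ) (hv0 : ∀ z ∈ S, 0 ≤ v z) (hIv : 0 < ∫ z in S, v z ∂μ)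
    {c η : ℝ} (huv : ∀ z ∈ S, |u z - c * v z| ≤ η * v z) :
    ∃ c', ∀ x ∈ S, |∫ z in S, K x z * u z ∂μ - c' * ∫ z in S, K x z * v z ∂μ| ≤
      η * (1 - Cl / Cu) * ∫ z in S, K x z * v z ∂μ := by
  set Iv := ∫ z in S, v z ∂μ
  set w := fun z => u z - c * v z
  have hw : IntegrableOn w S μ := hu.sub (hv.const_mul c)
  refine ⟨c + Cl / Cu * (∫ z in S, w z ∂μ) / Iv, fun x hx => ?_⟩
  have hKbdd : ∀ z ∈ S, |K x z| ≤ max |Cl| |Cu| := fun z hz =>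
    abs_le_max_abs_abs (hK x hx z hz).1 (hK x hx z hz).2
  have hKu := integrableOn_mul_of_abs_le hS (hKm x) hKbdd hu
  have hKv := integrableOn_mul_of_abs_le hS (hKm x) hKbdd hv
  set B := ∫ z in S, K x z * v z ∂μ
  -- `c'` is chosen so that `Ku - c' Kv = ∫ (K x - t) w` with `0 ≤ K x - t`, and then
  -- `|w| ≤ η v` gives the bound `η (Kv - t ∫ v) = η (1 - Cl / Cu) Kv`.
  set t := Cl / Cu * B / Iv
  have hB : B ≤ Cu * Iv := setIntegral_le_const_mul_setIntegral hS hKv hv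
    fun z hz => mul_le_mul_of_nonneg_right (hK x hx z hz).2 (hv0 z hz)
  have ht : t ≤ Cl := by
    rw [div_le_iff₀ hIv, div_mul_eq_mul_div, div_le_iff₀ hCu]
    nlinarith
  have hKt : ∀ z ∈ S, 0 ≤ K x z - t := fun z hz => by linarith [(hK x hx z hz).1]
  have hdiff : ∫ z in S, K x z * u z ∂μ - (c + Cl / Cu * (∫ z in S, w z ∂μ) / Iv) * B =
      ∫ z in S, (K x z - t) * w z ∂μ := by
    calc _ = (∫ z in S, K x z * u z ∂μ - c * B) - t * ∫ z in S, w z ∂μ := by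
          simp only [t]; field_simp; ring
      _ = ∫ z in S, (K x z * u z - c * (K x z * v z)) - t * w z ∂μ := by
          have hKw : IntegrableOn (fun z => K x z * u z - c * (K x z * v z)) S μ :=
            hKu.sub (hKv.const_mul c)
          rw [integral_sub hKw (hw.const_mul t),
            integral_sub hKu (hKv.const_mul c), integral_const_mul, integral_const_mul]
      _ = ∫ z in S, (K x z - t) * w z ∂μ := by
          congr 1; funext z; simp only [w]; ring
  have hbound : ∫ z in S, η * (K x z * v z) - η * t * v z ∂μ = η * (1 - Cl / Cu) * B := by
    rw [integral_sub (hKv.const_mul η) (hv.const_mul (η * t)), integral_const_mul,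
      integral_const_mul]
    simp only [t]; field_simp; ring
  rw [hdiff, ← hbound, ← Real.norm_eq_abs]
  refine norm_integral_le_of_norm_le ((hKv.const_mul η).sub (hv.const_mul (η * t)))
    ((ae_restrict_iff' hS).2 (ae_of_all _ fun z hz => ?_))
  rw [Real.norm_eq_abs, abs_mul, abs_of_nonneg (hKt z hz)]
  calc (K x z - t) * |w z| ≤ (K x z - t) * (η * v z) :=
        mul_le_mul_of_nonneg_left (huv z hz) (hKt z hz)
    _ = η * (K x z * v z) - η * t * v z := by ring

end KernelOperator

lemma abs_div_sub_div_le {N₀ N₁ D₀ D₁ c η R κ : ℝ} (hN₀ : 0 ≤ N₀) (hD₀ : 0 < D₀) (hκ : 0 < κ)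
    (hN : |N₁ - c * N₀| ≤ η * N₀) (hD : |D₁ - c * D₀| ≤ η * D₀) (hND : N₀ ≤ R * D₀)
    (hDD : κ * D₀ ≤ D₁) : |N₁ / D₁ - N₀ / D₀| ≤ 2 * η * R / κ := by
  have hD₁ : 0 < D₁ := (mul_pos hκ hD₀).trans_le hDD
  have hη : 0 ≤ η := nonneg_of_mul_nonneg_left ((abs_nonneg _).trans hD) hD₀
  have hR : 0 ≤ R := nonneg_of_mul_nonneg_left (hN₀.trans hND) hD₀
  -- Both differences are measured against the same multiple `c`, which then cancels.
  have hnum : |N₁ * D₀ - D₁ * N₀| ≤ 2 * η * N₀ * D₀ :=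
    calc |N₁ * D₀ - D₁ * N₀| = |(N₁ - c * N₀) * D₀ - N₀ * (D₁ - c * D₀)| := by
          congr 1; ring
      _ ≤ |N₁ - c * N₀| * D₀ + N₀ * |D₁ - c * D₀| := by
        refine (abs_sub _ _).trans_eq ?_
        rw [abs_mul, abs_mul, abs_of_pos hD₀, abs_of_nonneg hN₀]
      _ ≤ η * N₀ * D₀ + N₀ * (η * D₀) := by gcongr
      _ = 2 * η * N₀ * D₀ := by ring
  rw [div_sub_div _ _ hD₁.ne' hD₀.ne', abs_div, abs_of_pos (mul_pos hD₁ hD₀),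
    div_le_div_iff₀ (mul_pos hD₁ hD₀) hκ]
  calc |N₁ * D₀ - D₁ * N₀| * κ ≤ 2 * η * N₀ * D₀ * κ := by gcongr
    _ ≤ 2 * η * (R * D₀) * D₀ * κ := by gcongr
    _ = 2 * η * R * ((κ * D₀) * D₀) := by ring
    _ ≤ 2 * η * R * (D₁ * D₀) := by gcongr

lemma mul_mem_Icc_mul {a b c d x y : ℝ} (ha : 0 ≤ a) (hc : 0 ≤ c) (hx : x ∈ Icc a b)
    (hy : y ∈ Icc c d) : x * y ∈ Icc (a * c) (b * d) :=
  ⟨mul_le_mul hx.1 hy.1 hc (ha.trans hx.1),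
    mul_le_mul hx.2 hy.2 (hc.trans hy.1) ((ha.trans hx.1).trans hx.2)⟩

lemma le_div_mul_of_mem_Icc {Cl Cu x y : ℝ} (hCl : 0 < Cl) (hx : x ∈ Icc Cl Cu)
    (hy : y ∈ Icc Cl Cu) : x ≤ Cu / Cl * y :=
  calc x ≤ Cu / Cl * Cl := by rw [div_mul_cancel₀ Cu hCl.ne']; exact hx.2
    _ ≤ Cu / Cl * y :=
      mul_le_mul_of_nonneg_left hy.1 (div_nonneg (hCl.le.trans (hx.1.trans hx.2)) hCl.le)

section Box

variable {d : ℕ}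

lemma measurableSet_box {E : Set ℝ} (hE : MeasurableSet E) : MeasurableSet (box d E) :=
  MeasurableSet.univ_pi fun _ => hE

lemma volume_box_Icc (a b : ℝ) : volume (box d (Icc a b)) = ENNReal.ofReal (b - a) ^ d := by
  rw [box, volume_pi_pi]; simp

lemma volume_box_Icc_ne_top (a b : ℝ) : volume (box d (Icc a b)) ≠ ∞ := by
  rw [volume_box_Icc]; exact ENNReal.pow_ne_top ENNReal.ofReal_ne_top

lemma volume_real_box_Icc {a b : ℝ} (hab : a ≤ b) :
    volume.real (box d (Icc a b)) = (b - a) ^ d := by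
  rw [measureReal_def, volume_box_Icc, ENNReal.toReal_pow,
    ENNReal.toReal_ofReal (sub_nonneg.2 hab)]

lemma setIntegral_box_Icc_pos {a b : ℝ} (hab : a < b) {F : (Fin d → ℝ) → ℝ}
    (hF : IntegrableOn F (box d (Icc a b))) {lo : ℝ} (hlo : 0 < lo)
    (h : ∀ x ∈ box d (Icc a b), lo ≤ F x) : 0 < ∫ x in box d (Icc a b), F x := by
  refine (mul_pos hlo ?_).trans_le (setIntegral_ge_of_const_le_real
    (measurableSet_box measurableSet_Icc) (volume_box_Icc_ne_top a b) h hF)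
  rw [volume_real_box_Icc hab.le]
  exact pow_pos (sub_pos.2 hab) d

def splice (n : ℕ) (y z : Fin d → ℝ) : Fin d → ℝ := fun i => if (i : ℕ) < n then y i else z i

lemma marg_eq_setIntegral_splice (E : Set ℝ) (π : (Fin d → ℝ) → ℝ) (n : ℕ) (y : Fin d → ℝ) :
    marg d E π n y = (∫ z in box d E, π (splice n y z)) / (volume E).toReal ^ n := rfl

lemma splice_mem_box {E : Set ℝ} {n : ℕ} {y z : Fin d → ℝ} (hy : y ∈ box d E)
    (hz : z ∈ box d E) : splice n y z ∈ box d E := fun i _ => by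
  unfold splice; split_ifs
  exacts [hy i trivial, hz i trivial]

lemma update_mem_box {E : Set ℝ} {x : Fin d → ℝ} (hx : x ∈ box d E) (j : Fin d) {t : ℝ}
    (ht : t ∈ E) : Function.update x j t ∈ box d E := fun i _ => by
  rcases eq_or_ne i j with rfl | hij
  · simpa using ht
  · simpa [hij] using hx i trivial

lemma measurable_splice (n : ℕ) :
    Measurable fun p : (Fin d → ℝ) × (Fin d → ℝ) => splice n p.1 p.2 :=
  measurable_pi_lambda _ fun i => by
    unfold splice; split_ifs
    exacts [(measurable_pi_apply i).comp measurable_fst,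
      (measurable_pi_apply i).comp measurable_snd]

end Box

lemma measurable_mback {d : ℕ} {E : Set ℝ} {f : (Fin d → ℝ) → (Fin d → ℝ) → ℝ}
    {g : ℕ → (Fin d → ℝ) → ℝ} (hf : Measurable (Function.uncurry f))
    (hg : ∀ p, Measurable (g p)) (m : ℕ) : ∀ k, Measurable (mback d E f g m k) := by
  induction m with
  | zero => intro k; exact measurable_const
  | succ m ih =>
    intro k
    exact ((hf.mul ((hg (k + 1)).comp measurable_snd)).mul
      ((ih (k + 1)).comp measurable_snd)).stronglyMeasurable.integral_prod_right'.measurable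

section Backward

variable {d : ℕ} {a b : ℝ} {f : (Fin d → ℝ) → (Fin d → ℝ) → ℝ} {g : ℕ → (Fin d → ℝ) → ℝ}
  {Cl Cu : ℝ}

lemma kernel_mem_Icc
    (hA1 : ∀ p : ℕ, 1 ≤ p → ∀ x ∈ box d (Icc a b), ∀ x' ∈ box d (Icc a b),
      Cl ≤ g p x' * f x x' ∧ g p x' * f x x' ≤ Cu)
    (k : ℕ) {x z : Fin d → ℝ} (hx : x ∈ box d (Icc a b)) (hz : z ∈ box d (Icc a b)) :
    f x z * g (k + 1) z ∈ Icc Cl Cu := by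
  rw [mul_comm]; exact hA1 (k + 1) k.succ_pos x hx z hz

variable (hf : Measurable (Function.uncurry f)) (hg : ∀ p, Measurable (g p)) (hab : a < b)
  (hCl : 0 < Cl)
  (hA1 : ∀ p : ℕ, 1 ≤ p → ∀ x ∈ box d (Icc a b), ∀ x' ∈ box d (Icc a b),
    Cl ≤ g p x' * f x x' ∧ g p x' * f x x' ≤ Cu)
include hf hg hab hCl hA1

lemma mback_mem_Icc (m : ℕ) :
    ∀ k, ∀ x ∈ box d (Icc a b),
      mback d (Icc a b) f g m k x ∈ Icc ((Cl * (b - a) ^ d) ^ m) ((Cu * (b - a) ^ d) ^ m) := by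
  induction m with
  | zero => intro k x _; simp [mback]
  | succ m ih =>
    intro k x hx
    have hV : 0 ≤ (b - a) ^ d := pow_nonneg (sub_nonneg.2 hab.le) d
    have hKβ : ∀ z ∈ box d (Icc a b), f x z * g (k + 1) z * mback d (Icc a b) f g m (k + 1) z ∈
        Icc (Cl * (Cl * (b - a) ^ d) ^ m) (Cu * (Cu * (b - a) ^ d) ^ m) := fun z hz =>
      mul_mem_Icc_mul hCl.le (by positivity) (kernel_mem_Icc hA1 k hx hz) (ih (k + 1) z hz)
    have := setIntegral_mem_Icc (measurableSet_box measurableSet_Icc) (volume_box_Icc_ne_top a b)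
      (integrableOn_of_mem_Icc (measurableSet_box measurableSet_Icc) (volume_box_Icc_ne_top a b)
        ((hf.of_uncurry_left.mul (hg (k + 1))).mul (measurable_mback hf hg m (k + 1))) hKβ) hKβ
    rw [volume_real_box_Icc hab.le] at this
    rw [mback]
    exact ⟨(le_of_eq (by ring)).trans this.1, this.2.trans (le_of_eq (by ring))⟩

lemma integrableOn_mback (m k : ℕ) :
    IntegrableOn (mback d (Icc a b) f g m k) (box d (Icc a b)) :=
  integrableOn_of_mem_Icc (measurableSet_box measurableSet_Icc) (volume_box_Icc_ne_top a b)
    (measurable_mback hf hg m k) (mback_mem_Icc hf hg hab hCl hA1 m k)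

lemma mback_pos (m k : ℕ) {x : Fin d → ℝ} (hx : x ∈ box d (Icc a b)) :
    0 < mback d (Icc a b) f g m k x :=
  have hV : 0 < (b - a) ^ d := pow_pos (sub_pos.2 hab) d
  (by positivity : (0 : ℝ) < (Cl * (b - a) ^ d) ^ m).trans_le
    (mback_mem_Icc hf hg hab hCl hA1 m k x hx).1

lemma integrableOn_kernel_mul_mback (m k : ℕ) {x : Fin d → ℝ} (hx : x ∈ box d (Icc a b)) :
    IntegrableOn (fun z => f x z * g (k + 1) z * mback d (Icc a b) f g m (k + 1) z)
      (box d (Icc a b)) :=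
  integrableOn_mul_of_abs_le (measurableSet_box measurableSet_Icc)
    (hf.of_uncurry_left.mul (hg (k + 1)))
    (fun _ hz =>
      abs_le_max_abs_abs (kernel_mem_Icc hA1 k hx hz).1 (kernel_mem_Icc hA1 k hx hz).2)
    (integrableOn_mback hf hg hab hCl hA1 m (k + 1))

lemma mul_mback_le_mback_succ (m : ℕ) : ∀ k, ∀ x ∈ box d (Icc a b),
    Cl * (b - a) ^ d * mback d (Icc a b) f g m k x ≤ mback d (Icc a b) f g (m + 1) k x := by
  induction m with
  | zero =>
    intro k x hx
    simpa [mback] using (mback_mem_Icc hf hg hab hCl hA1 1 k x hx).1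
  | succ m ih =>
    intro k x hx
    rw [mback, mback, ← integral_const_mul]
    refine setIntegral_mono_on
      ((integrableOn_kernel_mul_mback hf hg hab hCl hA1 m k hx).const_mul _)
      (integrableOn_kernel_mul_mback hf hg hab hCl hA1 (m + 1) k hx)
      (measurableSet_box measurableSet_Icc) fun z hz => ?_
    calc Cl * (b - a) ^ d * (f x z * g (k + 1) z * mback d (Icc a b) f g m (k + 1) z)
        = f x z * g (k + 1) z * (Cl * (b - a) ^ d * mback d (Icc a b) f g m (k + 1) z) := by
          ring
      _ ≤ _ := mul_le_mul_of_nonneg_left (ih (k + 1) z hz)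
          (hCl.le.trans (kernel_mem_Icc hA1 k hx hz).1)

lemma mback_le_mul_mback (hClu : Cl ≤ Cu) (m k : ℕ) {y y' : Fin d → ℝ}
    (hy : y ∈ box d (Icc a b)) (hy' : y' ∈ box d (Icc a b)) :
    mback d (Icc a b) f g m k y ≤ Cu / Cl * mback d (Icc a b) f g m k y' := by
  cases m with
  | zero => simpa [mback] using (one_le_div hCl).2 hClu
  | succ m =>
    rw [mback, mback]
    refine setIntegral_le_const_mul_setIntegral (measurableSet_box measurableSet_Icc)
      (integrableOn_kernel_mul_mback hf hg hab hCl hA1 m k hy)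
      (integrableOn_kernel_mul_mback hf hg hab hCl hA1 m k hy') fun z hz => ?_
    have hK : f y z * g (k + 1) z ≤ Cu / Cl * (f y' z * g (k + 1) z) :=
      le_div_mul_of_mem_Icc hCl (kernel_mem_Icc hA1 k hy hz) (kernel_mem_Icc hA1 k hy' hz)
    calc f y z * g (k + 1) z * mback d (Icc a b) f g m (k + 1) z
        ≤ Cu / Cl * (f y' z * g (k + 1) z) * mback d (Icc a b) f g m (k + 1) z :=
          mul_le_mul_of_nonneg_right hK (mback_pos hf hg hab hCl hA1 m (k + 1) hz).le
      _ = _ := by ring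

lemma exists_abs_mback_succ_sub_le (hClu : Cl ≤ Cu) (m : ℕ) : ∀ k, ∃ c : ℝ,
    ∀ z ∈ box d (Icc a b),
      |mback d (Icc a b) f g (m + 1) k z - c * mback d (Icc a b) f g m k z| ≤
      (Cu - Cl) * (b - a) ^ d / 2 * (1 - Cl / Cu) ^ m * mback d (Icc a b) f g m k z := by
  induction m with
  | zero =>
    intro k
    refine ⟨(Cl + Cu) * (b - a) ^ d / 2, fun z hz => ?_⟩
    have h₁ := mback_mem_Icc hf hg hab hCl hA1 1 k z hz
    simp only [pow_one] at h₁
    simp only [mback, pow_zero, mul_one] at h₁ ⊢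
    rw [abs_le]
    constructor <;> linarith [h₁.1, h₁.2]
  | succ m ih =>
    intro k
    obtain ⟨c, hc⟩ := ih (k + 1)
    obtain ⟨c', hc'⟩ := exists_abs_setIntegral_kernel_sub_le (measurableSet_box measurableSet_Icc)
      hCl.le (hCl.trans_le hClu) (fun _ => hf.of_uncurry_left.mul (hg (k + 1)))
      (fun x hx z hz => kernel_mem_Icc hA1 k hx hz)
      (integrableOn_mback hf hg hab hCl hA1 (m + 1) (k + 1))
      (integrableOn_mback hf hg hab hCl hA1 m (k + 1))
      (fun z hz => (mback_pos hf hg hab hCl hA1 m (k + 1) hz).le)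
      (setIntegral_box_Icc_pos hab (integrableOn_mback hf hg hab hCl hA1 m (k + 1))
        (pow_pos (mul_pos hCl (pow_pos (sub_pos.2 hab) d)) m)
        fun z hz => (mback_mem_Icc hf hg hab hCl hA1 m (k + 1) z hz).1) hc
    refine ⟨c', fun x hx => ?_⟩
    rw [pow_succ, ← mul_assoc]
    exact hc' x hx

end Backward

section Marginal

variable {d : ℕ} {E : Set ℝ}

lemma marg_div_const (π : (Fin d → ℝ) → ℝ) (Z : ℝ) (n : ℕ) (y : Fin d → ℝ) :
    marg d E (fun x => π x / Z) n y = marg d E π n y / Z := by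
  simp only [marg, integral_div, div_right_comm _ Z]

variable (hE : MeasurableSet E) {π π₁ π₀ : (Fin d → ℝ) → ℝ} {n : ℕ} {y : Fin d → ℝ}
  (hy : y ∈ box d E)
include hE hy

lemma abs_marg_sub_const_mul_le (h₁ : IntegrableOn (fun z => π₁ (splice n y z)) (box d E))
    (h₀ : IntegrableOn (fun z => π₀ (splice n y z)) (box d E)) {c η : ℝ}
    (h : ∀ x ∈ box d E, |π₁ x - c * π₀ x| ≤ η * π₀ x) :
    |marg d E π₁ n y - c * marg d E π₀ n y| ≤ η * marg d E π₀ n y := by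
  simp only [marg_eq_setIntegral_splice]
  rw [mul_div_assoc', mul_div_assoc', ← sub_div, abs_div,
    abs_of_nonneg (pow_nonneg ENNReal.toReal_nonneg _)]
  exact div_le_div_of_nonneg_right
    (abs_setIntegral_sub_const_mul_le (measurableSet_box hE) h₁ h₀
      fun z hz => h _ (splice_mem_box hy hz)) (pow_nonneg ENNReal.toReal_nonneg _)

lemma mul_marg_le_marg (h₁ : IntegrableOn (fun z => π₁ (splice n y z)) (box d E))
    (h₀ : IntegrableOn (fun z => π₀ (splice n y z)) (box d E)) {κ : ℝ}
    (h : ∀ x ∈ box d E, κ * π₀ x ≤ π₁ x) : κ * marg d E π₀ n y ≤ marg d E π₁ n y := by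
  simp only [marg_eq_setIntegral_splice]
  rw [mul_div_assoc', ← integral_const_mul]
  exact div_le_div_of_nonneg_right
    (setIntegral_mono_on (h₀.const_mul κ) h₁ (measurableSet_box hE)
      fun z hz => h _ (splice_mem_box hy hz)) (pow_nonneg ENNReal.toReal_nonneg _)

lemma marg_succ_le_mul_marg {y' : Fin d → ℝ} (hy' : y' ∈ box d E)
    (h₁ : IntegrableOn (fun z => π (splice (n + 1) y z)) (box d E))
    (h₀ : IntegrableOn (fun z => π (splice n y' z)) (box d E)) {R : ℝ}
    (h : ∀ x ∈ box d E, ∀ x' ∈ box d E, π x ≤ R * π x') :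
    marg d E π (n + 1) y ≤ R / (volume E).toReal * marg d E π n y' := by
  simp only [marg_eq_setIntegral_splice]
  calc (∫ z in box d E, π (splice (n + 1) y z)) / (volume E).toReal ^ (n + 1)
      ≤ (R * ∫ z in box d E, π (splice n y' z)) / (volume E).toReal ^ (n + 1) :=
        div_le_div_of_nonneg_right (setIntegral_le_const_mul_setIntegral (measurableSet_box hE)
          h₁ h₀ fun z hz => h _ (splice_mem_box hy hz) _ (splice_mem_box hy' hz))
          (pow_nonneg ENNReal.toReal_nonneg _)
    _ = _ := by rw [pow_succ]; ring

end Marginal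

noncomputable def condDensity {d : ℕ} (E : Set ℝ) (π : (Fin d → ℝ) → ℝ) (j : Fin d)
    (x : Fin d → ℝ) (t : ℝ) : ℝ :=
  marg d E π ((j : ℕ) + 1) (Function.update x j t) / marg d E π (j : ℕ) x

lemma condLaw_eq_withDensity_condDensity {d : ℕ} (E : Set ℝ) (π : (Fin d → ℝ) → ℝ) (j : Fin d)
    (x : Fin d → ℝ) :
    condLaw d E π j x =
      (volume.restrict E).withDensity fun t => ENNReal.ofReal (condDensity E π j x t) :=
  rfl

lemma condDensity_div_const {d : ℕ} {E : Set ℝ} (π : (Fin d → ℝ) → ℝ) {Z : ℝ} (hZ : Z ≠ 0)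
    (j : Fin d) (x : Fin d → ℝ) :
    condDensity E (fun y => π y / Z) j x = condDensity E π j x := by
  funext t
  simp only [condDensity, marg_div_const, div_div_div_cancel_right₀ hZ]

lemma measurable_condDensity {d : ℕ} (E : Set ℝ) {π : (Fin d → ℝ) → ℝ} (hπ : Measurable π)
    (j : Fin d) (x : Fin d → ℝ) : Measurable (condDensity E π j x) := by
  have hF : Measurable fun p : ℝ × (Fin d → ℝ) =>
      π (splice ((j : ℕ) + 1) (Function.update x j p.1) p.2) :=
    hπ.comp ((measurable_splice _).comp
      (((measurable_update x).comp measurable_fst).prodMk measurable_snd))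
  exact (hF.stronglyMeasurable.integral_prod_right'.measurable.div_const _).div_const _

noncomputable def smootherWeight (d : ℕ) (E : Set ℝ) (f0 : (Fin d → ℝ) → ℝ)
    (f : (Fin d → ℝ) → (Fin d → ℝ) → ℝ) (g : ℕ → (Fin d → ℝ) → ℝ) (p : ℕ) (x : Fin d → ℝ) : ℝ :=
  f0 x * g 0 x * mback d E f g p 0 x

lemma msmootherDen_eq_div {d : ℕ} (E : Set ℝ) (f0 : (Fin d → ℝ) → ℝ)
    (f : (Fin d → ℝ) → (Fin d → ℝ) → ℝ) (g : ℕ → (Fin d → ℝ) → ℝ) (p : ℕ) :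
    msmootherDen d E f0 f g p = fun x =>
      smootherWeight d E f0 f g p x / ∫ y in box d E, smootherWeight d E f0 f g p y :=
  rfl

lemma measurable_smootherWeight {d : ℕ} {E : Set ℝ} {f0 : (Fin d → ℝ) → ℝ}
    {f : (Fin d → ℝ) → (Fin d → ℝ) → ℝ} {g : ℕ → (Fin d → ℝ) → ℝ} (hf0 : Measurable f0)
    (hf : Measurable (Function.uncurry f)) (hg : ∀ p, Measurable (g p)) (p : ℕ) :
    Measurable (smootherWeight d E f0 f g p) :=
  (hf0.mul (hg 0)).mul (measurable_mback hf hg p 0)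

lemma weight_mem_Icc {d : ℕ} {a b : ℝ} {f0 : (Fin d → ℝ) → ℝ} {g : ℕ → (Fin d → ℝ) → ℝ}
    {Cl Cu : ℝ} (hA1_0 : ∀ x ∈ box d (Icc a b), Cl ≤ g 0 x * f0 x ∧ g 0 x * f0 x ≤ Cu)
    {y : Fin d → ℝ} (hy : y ∈ box d (Icc a b)) : f0 y * g 0 y ∈ Icc Cl Cu := by
  rw [mul_comm]; exact hA1_0 y hy

section Smoother

variable {d : ℕ} {a b : ℝ} {f0 : (Fin d → ℝ) → ℝ} {f : (Fin d → ℝ) → (Fin d → ℝ) → ℝ}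
  {g : ℕ → (Fin d → ℝ) → ℝ} {Cl Cu : ℝ}
  (hf0 : Measurable f0) (hf : Measurable (Function.uncurry f)) (hg : ∀ p, Measurable (g p))
  (hab : a < b) (hCl : 0 < Cl)
  (hA1_0 : ∀ x ∈ box d (Icc a b), Cl ≤ g 0 x * f0 x ∧ g 0 x * f0 x ≤ Cu)
  (hA1 : ∀ p : ℕ, 1 ≤ p → ∀ x ∈ box d (Icc a b), ∀ x' ∈ box d (Icc a b),
    Cl ≤ g p x' * f x x' ∧ g p x' * f x x' ≤ Cu)

include hf hg hab hCl hA1_0 hA1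

lemma smootherWeight_mem_Icc (p : ℕ) {y : Fin d → ℝ} (hy : y ∈ box d (Icc a b)) :
    smootherWeight d (Icc a b) f0 f g p y ∈
      Icc (Cl * (Cl * (b - a) ^ d) ^ p) (Cu * (Cu * (b - a) ^ d) ^ p) :=
  mul_mem_Icc_mul hCl.le (pow_nonneg (mul_nonneg hCl.le (pow_nonneg (sub_nonneg.2 hab.le) d)) p)
    (weight_mem_Icc hA1_0 hy) (mback_mem_Icc hf hg hab hCl hA1 p 0 y hy)

lemma smootherWeight_le_mul (hClu : Cl ≤ Cu) (p : ℕ) {y y' : Fin d → ℝ}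
    (hy : y ∈ box d (Icc a b)) (hy' : y' ∈ box d (Icc a b)) :
    smootherWeight d (Icc a b) f0 f g p y ≤
      (Cu / Cl) ^ 2 * smootherWeight d (Icc a b) f0 f g p y' :=
  calc f0 y * g 0 y * mback d (Icc a b) f g p 0 y
      ≤ Cu / Cl * (f0 y' * g 0 y') * (Cu / Cl * mback d (Icc a b) f g p 0 y') :=
        mul_le_mul
          (le_div_mul_of_mem_Icc hCl (weight_mem_Icc hA1_0 hy) (weight_mem_Icc hA1_0 hy'))
          (mback_le_mul_mback hf hg hab hCl hA1 hClu p 0 hy hy')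
          (mback_pos hf hg hab hCl hA1 p 0 hy).le
          (mul_nonneg (div_nonneg (hCl.le.trans hClu) hCl.le)
            (hCl.le.trans (weight_mem_Icc hA1_0 hy').1))
    _ = (Cu / Cl) ^ 2 * (f0 y' * g 0 y' * mback d (Icc a b) f g p 0 y') := by ring

lemma mul_smootherWeight_le_succ (p : ℕ) {y : Fin d → ℝ} (hy : y ∈ box d (Icc a b)) :
    Cl * (b - a) ^ d * smootherWeight d (Icc a b) f0 f g p y ≤
      smootherWeight d (Icc a b) f0 f g (p + 1) y :=
  calc Cl * (b - a) ^ d * (f0 y * g 0 y * mback d (Icc a b) f g p 0 y)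
      = f0 y * g 0 y * (Cl * (b - a) ^ d * mback d (Icc a b) f g p 0 y) := by ring
    _ ≤ f0 y * g 0 y * mback d (Icc a b) f g (p + 1) 0 y :=
        mul_le_mul_of_nonneg_left (mul_mback_le_mback_succ hf hg hab hCl hA1 p 0 y hy)
          (hCl.le.trans (weight_mem_Icc hA1_0 hy).1)

lemma exists_abs_smootherWeight_succ_sub_le (hClu : Cl ≤ Cu) (p : ℕ) : ∃ c : ℝ,
    ∀ y ∈ box d (Icc a b), |smootherWeight d (Icc a b) f0 f g (p + 1) y -
      c * smootherWeight d (Icc a b) f0 f g p y| ≤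
      (Cu - Cl) * (b - a) ^ d / 2 * (1 - Cl / Cu) ^ p *
        smootherWeight d (Icc a b) f0 f g p y := by
  obtain ⟨c, hc⟩ := exists_abs_mback_succ_sub_le hf hg hab hCl hA1 hClu p 0
  refine ⟨c, fun y hy => ?_⟩
  have hw : 0 ≤ f0 y * g 0 y := hCl.le.trans (weight_mem_Icc hA1_0 hy).1
  calc |f0 y * g 0 y * mback d (Icc a b) f g (p + 1) 0 y -
        c * (f0 y * g 0 y * mback d (Icc a b) f g p 0 y)|
      = f0 y * g 0 y *
          |mback d (Icc a b) f g (p + 1) 0 y - c * mback d (Icc a b) f g p 0 y| := by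
        rw [mul_left_comm c, ← mul_sub, abs_mul, abs_of_nonneg hw]
    _ ≤ f0 y * g 0 y * ((Cu - Cl) * (b - a) ^ d / 2 * (1 - Cl / Cu) ^ p *
          mback d (Icc a b) f g p 0 y) := mul_le_mul_of_nonneg_left (hc y hy) hw
    _ = _ := by simp only [smootherWeight]; ring

include hf0

lemma integrableOn_smootherWeight_comp (p : ℕ) {φ : (Fin d → ℝ) → (Fin d → ℝ)}
    (hφ : Measurable φ) (hφS : ∀ z ∈ box d (Icc a b), φ z ∈ box d (Icc a b)) :
    IntegrableOn (fun z => smootherWeight d (Icc a b) f0 f g p (φ z)) (box d (Icc a b)) :=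
  integrableOn_of_mem_Icc (measurableSet_box measurableSet_Icc) (volume_box_Icc_ne_top a b)
    ((measurable_smootherWeight hf0 hf hg p).comp hφ)
    fun z hz => smootherWeight_mem_Icc hf hg hab hCl hA1_0 hA1 p (hφS z hz)

lemma setIntegral_smootherWeight_comp_pos (p : ℕ) {φ : (Fin d → ℝ) → (Fin d → ℝ)}
    (hφ : Measurable φ) (hφS : ∀ z ∈ box d (Icc a b), φ z ∈ box d (Icc a b)) :
    0 < ∫ z in box d (Icc a b), smootherWeight d (Icc a b) f0 f g p (φ z) :=
  setIntegral_box_Icc_pos hab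
    (integrableOn_smootherWeight_comp hf0 hf hg hab hCl hA1_0 hA1 p hφ hφS)
    (mul_pos hCl (pow_pos (mul_pos hCl (pow_pos (sub_pos.2 hab) d)) p))
    fun z hz => (smootherWeight_mem_Icc hf hg hab hCl hA1_0 hA1 p (hφS z hz)).1

lemma marg_smootherWeight_pos (p n : ℕ) {y : Fin d → ℝ} (hy : y ∈ box d (Icc a b)) :
    0 < marg d (Icc a b) (smootherWeight d (Icc a b) f0 f g p) n y := by
  refine div_pos (setIntegral_smootherWeight_comp_pos hf0 hf hg hab hCl hA1_0 hA1 p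
    ((measurable_splice n).comp measurable_prodMk_left) fun z hz => splice_mem_box hy hz) ?_
  rw [← measureReal_def, Real.volume_real_Icc_of_le hab.le]
  exact pow_pos (sub_pos.2 hab) n

lemma condLaw_msmootherDen (p : ℕ) (j : Fin d) (x : Fin d → ℝ) :
    condLaw d (Icc a b) (msmootherDen d (Icc a b) f0 f g p) j x =
      (volume.restrict (Icc a b)).withDensity fun t =>
        ENNReal.ofReal (condDensity (Icc a b) (smootherWeight d (Icc a b) f0 f g p) j x t) := by
  have hZ : 0 < ∫ y in box d (Icc a b), smootherWeight d (Icc a b) f0 f g p y :=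
    setIntegral_smootherWeight_comp_pos hf0 hf hg hab hCl hA1_0 hA1 p measurable_id fun z hz => hz
  rw [condLaw_eq_withDensity_condDensity, msmootherDen_eq_div, condDensity_div_const _ hZ.ne']

variable {x : Fin d → ℝ} (hx : x ∈ box d (Icc a b)) (j : Fin d)
include hx

section Point

variable {t : ℝ} (ht : t ∈ Icc a b)
include ht

lemma marg_update_le_mul_marg (hClu : Cl ≤ Cu) (p : ℕ) :
    marg d (Icc a b) (smootherWeight d (Icc a b) f0 f g p) ((j : ℕ) + 1)
        (Function.update x j t) ≤
      (Cu / Cl) ^ 2 / (b - a) * marg d (Icc a b) (smootherWeight d (Icc a b) f0 f g p) j x := by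
  have hy := update_mem_box hx j ht
  rw [← Real.volume_real_Icc_of_le hab.le, measureReal_def]
  exact marg_succ_le_mul_marg measurableSet_Icc hy hx
    (integrableOn_smootherWeight_comp hf0 hf hg hab hCl hA1_0 hA1 p
      ((measurable_splice _).comp measurable_prodMk_left) fun z hz => splice_mem_box hy hz)
    (integrableOn_smootherWeight_comp hf0 hf hg hab hCl hA1_0 hA1 p
      ((measurable_splice _).comp measurable_prodMk_left) fun z hz => splice_mem_box hx hz)
    fun y hy y' hy' => smootherWeight_le_mul hf hg hab hCl hA1_0 hA1 hClu p hy hy'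

lemma condDensity_smootherWeight_mem_Icc (hClu : Cl ≤ Cu) (p : ℕ) :
    condDensity (Icc a b) (smootherWeight d (Icc a b) f0 f g p) j x t ∈
      Icc 0 ((Cu / Cl) ^ 2 / (b - a)) := by
  have hD := marg_smootherWeight_pos hf0 hf hg hab hCl hA1_0 hA1 p j hx
  refine ⟨div_nonneg (marg_smootherWeight_pos hf0 hf hg hab hCl hA1_0 hA1 p _
    (update_mem_box hx j ht)).le hD.le, ?_⟩
  rw [condDensity, div_le_iff₀ hD]
  exact marg_update_le_mul_marg hf0 hf hg hab hCl hA1_0 hA1 hx j ht hClu p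

lemma abs_condDensity_smootherWeight_succ_sub_le (hClu : Cl ≤ Cu) (q : ℕ) :
    |condDensity (Icc a b) (smootherWeight d (Icc a b) f0 f g (q + 1)) j x t -
        condDensity (Icc a b) (smootherWeight d (Icc a b) f0 f g q) j x t| ≤
      (Cu - Cl) * (Cu / Cl) ^ 2 / Cl * (1 - Cl / Cu) ^ q / (b - a) := by
  have hy := update_mem_box hx j ht
  have hV : 0 < (b - a) ^ d := pow_pos (sub_pos.2 hab) d
  obtain ⟨c, hc⟩ := exists_abs_smootherWeight_succ_sub_le hf hg hab hCl hA1_0 hA1 hClu q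
  have hint : ∀ p n {y}, y ∈ box d (Icc a b) → IntegrableOn
      (fun z => smootherWeight d (Icc a b) f0 f g p (splice n y z)) (box d (Icc a b)) :=
    fun p n y hy => integrableOn_smootherWeight_comp hf0 hf hg hab hCl hA1_0 hA1 p
      ((measurable_splice n).comp measurable_prodMk_left) fun z hz => splice_mem_box hy hz
  calc _ ≤ 2 * ((Cu - Cl) * (b - a) ^ d / 2 * (1 - Cl / Cu) ^ q) * ((Cu / Cl) ^ 2 / (b - a)) /
        (Cl * (b - a) ^ d) :=
      abs_div_sub_div_le (marg_smootherWeight_pos hf0 hf hg hab hCl hA1_0 hA1 q _ hy).le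
        (marg_smootherWeight_pos hf0 hf hg hab hCl hA1_0 hA1 q _ hx) (mul_pos hCl hV)
        (abs_marg_sub_const_mul_le measurableSet_Icc hy (hint _ _ hy) (hint _ _ hy) hc)
        (abs_marg_sub_const_mul_le measurableSet_Icc hx (hint _ _ hx) (hint _ _ hx) hc)
        (marg_update_le_mul_marg hf0 hf hg hab hCl hA1_0 hA1 hx j ht hClu q)
        (mul_marg_le_marg measurableSet_Icc hx (hint _ _ hx) (hint _ _ hx)
          fun y hy => mul_smootherWeight_le_succ hf hg hab hCl hA1_0 hA1 q hy)
    _ = _ := by field_simp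

end Point

lemma tvDist_condLaw_msmootherDen_succ_le (hClu : Cl ≤ Cu) (q : ℕ) :
    tvDist (condLaw d (Icc a b) (msmootherDen d (Icc a b) f0 f g (q + 1)) j x)
        (condLaw d (Icc a b) (msmootherDen d (Icc a b) f0 f g q) j x) ≤
      (Cu - Cl) * (Cu / Cl) ^ 2 / Cl * (1 - Cl / Cu) ^ q := by
  rw [condLaw_msmootherDen hf0 hf hg hab hCl hA1_0 hA1,
    condLaw_msmootherDen hf0 hf hg hab hCl hA1_0 hA1]
  have hint : ∀ p, IntegrableOn (condDensity (Icc a b) (smootherWeight d (Icc a b) f0 f g p) j x)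
      (Icc a b) := fun p =>
    integrableOn_of_mem_Icc measurableSet_Icc measure_Icc_lt_top.ne
      (measurable_condDensity _ (measurable_smootherWeight hf0 hf hg p) j x)
      fun t ht => condDensity_smootherWeight_mem_Icc hf0 hf hg hab hCl hA1_0 hA1 hx j ht hClu p
  have hnn : ∀ p, 0 ≤ᵐ[volume.restrict (Icc a b)]
      condDensity (Icc a b) (smootherWeight d (Icc a b) f0 f g p) j x := fun p =>
    (ae_restrict_iff' measurableSet_Icc).2 <| ae_of_all _ fun t ht =>
      (condDensity_smootherWeight_mem_Icc hf0 hf hg hab hCl hA1_0 hA1 hx j ht hClu p).1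
  calc _ ≤ _ := tvDist_withDensity_ofReal_le (hint _) (hint _) (hnn _) (hnn _)
    _ ≤ (Cu - Cl) * (Cu / Cl) ^ 2 / Cl * (1 - Cl / Cu) ^ q / (b - a) * volume.real (Icc a b) :=
      (setIntegral_mem_Icc measurableSet_Icc measure_Icc_lt_top.ne ((hint _).sub (hint _)).abs
        fun t ht => ⟨abs_nonneg _, abs_condDensity_smootherWeight_succ_sub_le hf0 hf hg hab hCl
          hA1_0 hA1 hx j ht hClu q⟩).2
    _ = _ := by rw [Real.volume_real_Icc_of_le hab.le]; field_simp [(sub_pos.2 hab).ne']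

end Smoother

theorem stmt8_general (d : ℕ) (a b : ℝ) (hab : a < b)
    (f0 : (Fin d → ℝ) → ℝ) (f : (Fin d → ℝ) → (Fin d → ℝ) → ℝ)
    (g : ℕ → (Fin d → ℝ) → ℝ)
    (hf0 : Measurable f0) (hf : Measurable (Function.uncurry f))
    (hg : ∀ p, Measurable (g p))
    (Cl Cu : ℝ) (hCl : 0 < Cl) (hClu : Cl < Cu)
    (hA1_0 : ∀ x ∈ box d (Set.Icc a b), Cl ≤ g 0 x * f0 x ∧ g 0 x * f0 x ≤ Cu)
    (hA1 : ∀ p : ℕ, 1 ≤ p → ∀ x ∈ box d (Set.Icc a b), ∀ x' ∈ box d (Set.Icc a b),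
      Cl ≤ g p x' * f x x' ∧ g p x' * f x x' ≤ Cu) :
    ∃ (C ρ : ℝ), 0 < C ∧ ρ ∈ Set.Ioo (0:ℝ) 1 ∧
      ∀ (j : ℕ) (hj : j < d), 1 ≤ j → ∀ p : ℕ, 1 ≤ p →
        ∀ x ∈ box d (Set.Icc a b),
          tvDist
            (condLaw d (Set.Icc a b)
              (msmootherDen d (Set.Icc a b) f0 f g p) ⟨j, hj⟩ x)
            (condLaw d (Set.Icc a b)
              (msmootherDen d (Set.Icc a b) f0 f g (p - 1)) ⟨j, hj⟩ x)
          ≤ C * ρ ^ (p - 1) := by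
  have hCu : 0 < Cu := hCl.trans hClu
  refine ⟨(Cu - Cl) * (Cu / Cl) ^ 2 / Cl, 1 - Cl / Cu, by have := sub_pos.2 hClu; positivity,
    ⟨sub_pos.2 ((div_lt_one hCu).2 hClu), sub_lt_self 1 (div_pos hCl hCu)⟩, ?_⟩
  rintro j hj - p hp x hx
  obtain ⟨q, rfl⟩ := Nat.exists_eq_add_of_le' hp
  simpa using tvDist_condLaw_msmootherDen_succ_le hf0 hf hg hab hCl hA1_0 hA1 hx ⟨j, hj⟩ hClu.le q

/-- Lemma 1, part 3: under (A1)-(A2), the conditional distributions of the `(j+1)`-th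
coordinate of the time-0 smoother given the first `j` coordinates converge geometrically in
total variation, uniformly in the conditioning point. -/
theorem stmt8 (d : ℕ) (hd : 1 ≤ d) (a b : ℝ) (hab : a < b)
    (f0 : (Fin d → ℝ) → ℝ) (f : (Fin d → ℝ) → (Fin d → ℝ) → ℝ)
    (g : ℕ → (Fin d → ℝ) → ℝ)
    (hf0 : Measurable f0) (hf : Measurable (Function.uncurry f))
    (hg : ∀ p, Measurable (g p))
    (Cl Cu : ℝ) (hCl : 0 < Cl) (hClu : Cl < Cu)
    (hA1_0 : ∀ x ∈ box d (Set.Icc a b), Cl ≤ g 0 x * f0 x ∧ g 0 x * f0 x ≤ Cu)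
    (hA1 : ∀ p : ℕ, 1 ≤ p → ∀ x ∈ box d (Set.Icc a b), ∀ x' ∈ box d (Set.Icc a b),
      Cl ≤ g p x' * f x x' ∧ g p x' * f x x' ≤ Cu)
    (CL : ℝ)
    (hA2_g : ∀ x x', |g 0 x - g 0 x'| ≤ CL * dist x x')
    (hA2_f : ∀ x x' z, |f x z - f x' z| ≤ CL * dist x x')
    (hA2_f0 : ∀ x x', |f0 x - f0 x'| ≤ CL * dist x x') :
    ∃ (C ρ : ℝ), 0 < C ∧ ρ ∈ Set.Ioo (0:ℝ) 1 ∧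
      ∀ (j : ℕ) (hj : j < d), 1 ≤ j → ∀ p : ℕ, 1 ≤ p →
        ∀ x ∈ box d (Set.Icc a b),
          tvDist
            (condLaw d (Set.Icc a b)
              (msmootherDen d (Set.Icc a b) f0 f g p) ⟨j, hj⟩ x)
            (condLaw d (Set.Icc a b)
              (msmootherDen d (Set.Icc a b) f0 f g (p - 1)) ⟨j, hj⟩ x)
          ≤ C * ρ ^ (p - 1) :=
  stmt8_general d a b hab f0 f g hf0 hf hg Cl Cu hCl hClu hA1_0 hA1
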